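/- arXiv:1304.3645 — 5 statements merged into one kernel-verified Lean document; each statement's English description precedes it below -/
import Mathlib

section
/- Let S = ℚ[α] be a polynomial ring in one variable. The set of triples (f_x, f_y, f_z) ∈ S³ satisfying f_x ≡ f_y ≡ f_z mod α and f_x − 2f_y + f_z ≡ 0 mod α² is a subring of S³, and it is a free S-module of rank 3, with basis (1,1,1), (α, 0, −α), (α², 0, 0). -/
open Polynomial

namespace Stmt9

/-- The GKM congruence conditions on triples over `S = ℚ[α]` (here `α = X`):
`f_x ≡ f_y ≡ f_z mod α` and `f_x − 2 f_y + f_z ≡ 0 mod α²`. -/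
def P3 (f : ℚ[X] × ℚ[X] × ℚ[X]) : Prop :=
  X ∣ f.1 - f.2.1 ∧ X ∣ f.2.1 - f.2.2 ∧ X ^ 2 ∣ f.1 - 2 * f.2.1 + f.2.2

/-!
Closure of the congruence conditions under products rests on the identity
`Δ²(fg) = g₁ Δ²f + f₂ Δ²g + (f₂ - f₃)(g₁ - g₃)` for the second difference `Δ²f = f₁ - 2f₂ + f₃`,
whose last term is a product of two multiples of `a`.
Every triple `f` satisfying the conditions is `f₂ (1,1,1) + u (a,0,-a) + v (a²,0,0)` with
`f₂ - f₃ = a u` and `Δ²f = a² v`; the coefficients are unique as soon as `a` is a non-zero-divisor,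
since they are read off from `c₀`, `a c₁` and `a² c₂`.
-/

section CongruenceTriples

variable {R : Type*} [CommRing R]

lemma sq_dvd_secondDiff_mul {a : R} {f g : R × R × R}
    (hf₂ : a ∣ f.2.1 - f.2.2) (hf : a ^ 2 ∣ f.1 - 2 * f.2.1 + f.2.2)
    (hg₁ : a ∣ g.1 - g.2.1) (hg₂ : a ∣ g.2.1 - g.2.2) (hg : a ^ 2 ∣ g.1 - 2 * g.2.1 + g.2.2) :
    a ^ 2 ∣ f.1 * g.1 - 2 * (f.2.1 * g.2.1) + f.2.2 * g.2.2 := by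
  have key : f.1 * g.1 - 2 * (f.2.1 * g.2.1) + f.2.2 * g.2.2 =
      g.1 * (f.1 - 2 * f.2.1 + f.2.2) + f.2.1 * (g.1 - 2 * g.2.1 + g.2.2) +
        (f.2.1 - f.2.2) * ((g.1 - g.2.1) + (g.2.1 - g.2.2)) := by ring
  rw [key]
  refine dvd_add (dvd_add (hf.mul_left _) (hg.mul_left _)) ?_
  rw [sq]
  exact mul_dvd_mul hf₂ (dvd_add hg₁ hg₂)

variable (R) in
def congruenceTriples (a : R) : Subalgebra R (R × R × R) where
  carrier := {f | a ∣ f.1 - f.2.1 ∧ a ∣ f.2.1 - f.2.2 ∧ a ^ 2 ∣ f.1 - 2 * f.2.1 + f.2.2}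
  mul_mem' := by
    rintro f g ⟨hf₁, hf₂, hf⟩ ⟨hg₁, hg₂, hg⟩
    simp only [Set.mem_ofPred_eq, Prod.fst_mul, Prod.snd_mul]
    refine ⟨?_, ?_, sq_dvd_secondDiff_mul hf₂ hf hg₁ hg₂ hg⟩
    · convert dvd_add (hf₁.mul_left g.1) (hg₁.mul_left f.2.1) using 1
      ring
    · convert dvd_add (hf₂.mul_left g.2.1) (hg₂.mul_left f.2.2) using 1
      ring
  add_mem' := by
    rintro f g ⟨hf₁, hf₂, hf⟩ ⟨hg₁, hg₂, hg⟩
    simp only [Set.mem_ofPred_eq, Prod.fst_add, Prod.snd_add]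
    refine ⟨?_, ?_, ?_⟩
    · convert dvd_add hf₁ hg₁ using 1
      ring
    · convert dvd_add hf₂ hg₂ using 1
      ring
    · convert dvd_add hf hg using 1
      ring
  algebraMap_mem' r := by simp [show r - 2 * r + r = 0 by ring]

variable {a : R}

lemma mem_congruenceTriples {f : R × R × R} :
    f ∈ congruenceTriples R a ↔
      a ∣ f.1 - f.2.1 ∧ a ∣ f.2.1 - f.2.2 ∧ a ^ 2 ∣ f.1 - 2 * f.2.1 + f.2.2 :=
  Iff.rfl

lemma mk_self_zero_neg_mem_congruenceTriples : (a, 0, -a) ∈ congruenceTriples R a :=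
  mem_congruenceTriples.2 ⟨⟨1, by ring⟩, ⟨1, by ring⟩, ⟨0, by ring⟩⟩

lemma mk_sq_zero_zero_mem_congruenceTriples : (a ^ 2, 0, 0) ∈ congruenceTriples R a :=
  mem_congruenceTriples.2 ⟨⟨a, by ring⟩, ⟨0, by ring⟩, ⟨1, by ring⟩⟩

variable (a) in
def congruenceCombination (c : Fin 3 → R) : R × R × R :=
  c 0 • (1, 1, 1) + c 1 • (a, 0, -a) + c 2 • (a ^ 2, 0, 0)

lemma congruenceCombination_apply (c : Fin 3 → R) :
    congruenceCombination a c = (c 0 + a * c 1 + a ^ 2 * c 2, c 0, c 0 - a * c 1) := by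
  simp only [congruenceCombination, Prod.smul_mk, Prod.mk_add_mk, smul_eq_mul]
  ext <;> dsimp only <;> ring

lemma exists_congruenceCombination_eq {f : R × R × R} (hf : f ∈ congruenceTriples R a) :
    ∃ c, congruenceCombination a c = f := by
  obtain ⟨-, ⟨u, hu⟩, ⟨v, hv⟩⟩ := hf
  refine ⟨![f.2.1, u, v], ?_⟩
  rw [congruenceCombination_apply]
  ext <;> simp only [Matrix.cons_val_zero, Matrix.cons_val_one, Matrix.cons_val_two,
    Matrix.head_cons, Matrix.tail_cons]
  · linear_combination -hu - hv
  · linear_combination hu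

lemma congruenceCombination_injective (ha : IsLeftRegular a) :
    Function.Injective (congruenceCombination a) := by
  intro c d h
  simp only [congruenceCombination_apply, Prod.mk.injEq] at h
  obtain ⟨h₁, h₀, h₂⟩ := h
  have e₁ : c 1 = d 1 := ha (by linear_combination h₀ - h₂)
  have e₂ : c 2 = d 2 := (ha.pow 2) (by linear_combination h₁ - h₀ - a * e₁)
  ext i
  fin_cases i <;> assumption

end CongruenceTriples

/-- The set of triples `(f_x, f_y, f_z) ∈ S³` with `f_x ≡ f_y ≡ f_z mod α` and
`f_x − 2f_y + f_z ≡ 0 mod α²` is a subring of `S³` and a free `S`-module of rank 3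
with basis `(1,1,1)`, `(α,0,−α)`, `(α²,0,0)`. -/
theorem congruence_triples_subring_and_free :
    -- subring conditions
    P3 (1, 1, 1) ∧
    (∀ a b, P3 a → P3 b → P3 (a + b)) ∧
    (∀ a, P3 a → P3 (-a)) ∧
    (∀ a b, P3 a → P3 b → P3 (a * b)) ∧
    -- `S`-submodule condition
    (∀ (c : ℚ[X]) a, P3 a → P3 (c • a)) ∧
    -- the basis elements satisfy the conditions
    P3 (X, 0, -X) ∧ P3 (X ^ 2, 0, 0) ∧
    -- free of rank 3 with the given basis
    (∀ f, P3 f → ∃! c : Fin 3 → ℚ[X],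
      f = c 0 • ((1, 1, 1) : ℚ[X] × ℚ[X] × ℚ[X]) + c 1 • (X, 0, -X) + c 2 • (X ^ 2, 0, 0)) := by
  let S := congruenceTriples ℚ[X] X
  refine ⟨S.one_mem, fun _ _ => S.add_mem, fun _ => S.neg_mem, fun _ _ => S.mul_mem,
    fun c _ hf => Subalgebra.smul_mem S hf c, mk_self_zero_neg_mem_congruenceTriples,
    mk_sq_zero_zero_mem_congruenceTriples, fun f hf => ?_⟩
  obtain ⟨c, rfl⟩ := exists_congruenceCombination_eq (a := X) hf
  exact ⟨c, rfl, fun d hd => congruenceCombination_injective isRegular_X.left hd.symm⟩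

end Stmt9
end

section
/- Let S = ℚ[α]. The set of quadruples (f_x, f_y, f_z, f_t) ∈ S⁴ satisfying f_x ≡ f_y ≡ f_z ≡ f_t mod α and f_x − f_y + f_z − f_t ≡ 0 mod α² is a subring of S⁴ and a free S-module of rank 4. -/
/-!
The congruences are stable under products because, in
`x₁y₁ - x₂y₂ + x₃y₃ - x₄y₄ = x₁(y₁ - y₂ + y₃ - y₄) - (x₁ - x₃)(y₃ - y₄) + (x₁ - x₂)(y₂ - y₄)
  + (x₁ - x₂ + x₃ - x₄)y₄`,
every summand is divisible by `α²` through one factor or through both. They also contain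
the diagonal, so they cut out a subalgebra. A basis is `(1,1,1,1), (α,0,0,α), (α,α,0,0),
(α²,0,0,0)`: the coordinates of `f` are `f_z`, `(f_t - f_z)/α`, `(f_y - f_z)/α` and
`(f_x - f_y + f_z - f_t)/α²`, and they are unique as `α` is a non-zero-divisor.
-/

open Polynomial

namespace Stmt10

/-- The GKM congruence conditions on quadruples over `S = ℚ[α]` (here `α = X`):
`f_x ≡ f_y ≡ f_z ≡ f_t mod α` and `f_x − f_y + f_z − f_t ≡ 0 mod α²`. -/
def P4 (f : ℚ[X] × ℚ[X] × ℚ[X] × ℚ[X]) : Prop :=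
  X ∣ f.1 - f.2.1 ∧ X ∣ f.2.1 - f.2.2.1 ∧ X ∣ f.2.2.1 - f.2.2.2 ∧
    X ^ 2 ∣ f.1 - f.2.1 + f.2.2.1 - f.2.2.2

section CongruenceQuadruples

variable {R : Type*} [CommRing R] (a : R)

def congruenceQuadruples : Subalgebra R (R × R × R × R) where
  carrier := {f | a ∣ f.1 - f.2.1 ∧ a ∣ f.2.1 - f.2.2.1 ∧ a ∣ f.2.2.1 - f.2.2.2 ∧
    a ^ 2 ∣ f.1 - f.2.1 + f.2.2.1 - f.2.2.2}
  algebraMap_mem' c := by simp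
  add_mem' := by
    rintro ⟨x₁, x₂, x₃, x₄⟩ ⟨y₁, y₂, y₃, y₄⟩ ⟨hx₁, hx₂, hx₃, hx₄⟩ ⟨hy₁, hy₂, hy₃, hy₄⟩
    refine ⟨?_, ?_, ?_, ?_⟩ <;> dsimp only [Prod.mk_add_mk]
    · simpa only [add_sub_add_comm] using dvd_add hx₁ hy₁
    · simpa only [add_sub_add_comm] using dvd_add hx₂ hy₂
    · simpa only [add_sub_add_comm] using dvd_add hx₃ hy₃
    · convert dvd_add hx₄ hy₄ using 1; ring
  mul_mem' := by
    rintro ⟨x₁, x₂, x₃, x₄⟩ ⟨y₁, y₂, y₃, y₄⟩ ⟨hx₁, hx₂, hx₃, hx₄⟩ ⟨hy₁, hy₂, hy₃, hy₄⟩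
    refine ⟨dvd_mul_sub_mul hx₁ hy₁, dvd_mul_sub_mul hx₂ hy₂, dvd_mul_sub_mul hx₃ hy₃, ?_⟩
    dsimp only [Prod.mk_mul_mk]
    have hx₁₃ : a ∣ x₁ - x₃ := by simpa using dvd_add hx₁ hx₂
    have hy₂₄ : a ∣ y₂ - y₄ := by simpa using dvd_add hy₂ hy₃
    have key : x₁ * y₁ - x₂ * y₂ + x₃ * y₃ - x₄ * y₄ =
        x₁ * (y₁ - y₂ + y₃ - y₄) - (x₁ - x₃) * (y₃ - y₄) + (x₁ - x₂) * (y₂ - y₄) +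
          (x₁ - x₂ + x₃ - x₄) * y₄ := by ring
    rw [key, sq]
    rw [sq] at hx₄ hy₄
    exact dvd_add (dvd_add (dvd_sub (dvd_mul_of_dvd_right hy₄ _) (mul_dvd_mul hx₁₃ hy₃))
      (mul_dvd_mul hx₁ hy₂₄)) (dvd_mul_of_dvd_left hx₄ _)

theorem mem_congruenceQuadruples {f₁ f₂ f₃ f₄ : R} :
    (f₁, f₂, f₃, f₄) ∈ congruenceQuadruples a ↔
      a ∣ f₁ - f₂ ∧ a ∣ f₂ - f₃ ∧ a ∣ f₃ - f₄ ∧ a ^ 2 ∣ f₁ - f₂ + f₃ - f₄ :=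
  Iff.rfl

def congruenceBasis : Fin 4 → R × R × R × R :=
  ![(1, 1, 1, 1), (a, 0, 0, a), (a, a, 0, 0), (a ^ 2, 0, 0, 0)]

theorem congruenceBasis_mem (i : Fin 4) : congruenceBasis a i ∈ congruenceQuadruples a := by
  fin_cases i <;> simp [congruenceBasis, mem_congruenceQuadruples]

theorem sum_smul_congruenceBasis (c : Fin 4 → R) :
    ∑ i, c i • congruenceBasis a i =
      (c 0 + c 1 * a + c 2 * a + c 3 * a ^ 2, c 0 + c 2 * a, c 0, c 0 + c 1 * a) := by
  simp only [Fin.sum_univ_four, congruenceBasis, Matrix.cons_val]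
  ext <;> simp

theorem exists_eq_sum_smul_congruenceBasis {f : R × R × R × R}
    (hf : f ∈ congruenceQuadruples a) : ∃ c : Fin 4 → R, f = ∑ i, c i • congruenceBasis a i := by
  obtain ⟨f₁, f₂, f₃, f₄⟩ := f
  obtain ⟨-, ⟨q₂, hq₂⟩, ⟨q₃, hq₃⟩, ⟨q₄, hq₄⟩⟩ := hf
  refine ⟨![f₃, -q₃, q₂, q₄], ?_⟩
  rw [sum_smul_congruenceBasis]
  simp only [Matrix.cons_val, Prod.mk.injEq]
  refine ⟨?_, ?_, trivial, ?_⟩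
  · linear_combination hq₂ + hq₄ - hq₃
  · linear_combination hq₂
  · linear_combination -hq₃

theorem sum_smul_congruenceBasis_injective {a : R} (ha : IsLeftRegular a) :
    Function.Injective fun c : Fin 4 → R ↦ ∑ i, c i • congruenceBasis a i := by
  intro c d h
  simp only [sum_smul_congruenceBasis, Prod.mk.injEq] at h
  obtain ⟨h₁, h₂, h₀, h₄⟩ := h
  have h₂' : c 2 = d 2 := ha (by linear_combination h₂ - h₀)
  have h₁' : c 1 = d 1 := ha (by linear_combination h₄ - h₀)
  have h₃' : c 3 = d 3 := ha.pow 2 (by linear_combination h₁ - h₄ - h₂ + h₀)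
  ext i
  fin_cases i <;> assumption

end CongruenceQuadruples

/-- The set of quadruples `(f_x, f_y, f_z, f_t) ∈ S⁴` with
`f_x ≡ f_y ≡ f_z ≡ f_t mod α` and `f_x − f_y + f_z − f_t ≡ 0 mod α²` is a subring of
`S⁴` and a free `S`-module of rank 4. -/
theorem congruence_quadruples_subring_and_free :
    -- subring conditions
    P4 (1, 1, 1, 1) ∧
    (∀ a b, P4 a → P4 b → P4 (a + b)) ∧
    (∀ a, P4 a → P4 (-a)) ∧
    (∀ a b, P4 a → P4 b → P4 (a * b)) ∧
    -- `S`-submodule condition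
    (∀ (c : ℚ[X]) a, P4 a → P4 (c • a)) ∧
    -- free of rank 4
    (∃ b : Fin 4 → ℚ[X] × ℚ[X] × ℚ[X] × ℚ[X],
      (∀ i, P4 (b i)) ∧
      ∀ f, P4 f → ∃! c : Fin 4 → ℚ[X], f = ∑ i, c i • b i) := by
  have hP4 : P4 = (· ∈ congruenceQuadruples (X : ℚ[X])) := rfl
  rw [hP4]
  refine ⟨one_mem _, fun _ _ ↦ add_mem, fun _ ↦ neg_mem, fun _ _ ↦ mul_mem,
    fun c _ hf ↦ Subalgebra.smul_mem _ hf c, congruenceBasis X, congruenceBasis_mem X,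
    fun f hf ↦ ?_⟩
  obtain ⟨c, rfl⟩ := exists_eq_sum_smul_congruenceBasis X hf
  exact ⟨c, rfl, fun d hd ↦ sum_smul_congruenceBasis_injective isRegular_X.left hd.symm⟩

end Stmt10
end

section
/- Let R be a ℕ-graded commutative ring with R₀ a field, let W be a finite group acting on R by graded ring automorphisms, and suppose R is free as a module over the invariant ring R^W. Let M be a graded R^W-module, finitely generated, such that M ⊗_{R^W} R is a free R-module. Then M is a free R^W-module. -/
/-!
`S = R^W` is a graded subring of `R` (as `W` preserves the grading) whose nonzero elements of
degree zero are units (the inverse of an invariant element is invariant). Choose a homogeneous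
generating set `G` of `M` of minimal size. By graded Nakayama every relation among the elements
of `G` has coefficients in the irrelevant ideal `S₊`, so the kernel of the surjection
`φ : S^G → M` lies in `S₊ • S^G`, and by right exactness of `R ⊗_S -` the kernel `K` of the
surjection `R ⊗_S φ : R^G → R ⊗_S M` lies in `R₊ • R^G`. Since `R ⊗_S M` is projective, `K` is a
direct summand, hence `K = R₊ • K ⊆ ⋂ₙ R₊ⁿ • R^G = 0` (elements of `R₊ⁿ` vanish in degrees
below `n`). As `S^G → R ⊗_S S^G` is injective, `φ` is injective, so `M ≅ S^G` is free.
-/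

open scoped TensorProduct

namespace Stmt15

def fixedSubring (W R : Type*) [Monoid W] [CommRing R] [MulSemiringAction W R] :
    Subring R where
  carrier := {r | ∀ w : W, w • r = r}
  one_mem' := fun w => smul_one w
  mul_mem' := fun {a b} ha hb w => by rw [smul_mul', ha w, hb w]
  add_mem' := fun {a b} ha hb w => by rw [smul_add, ha w, hb w]
  zero_mem' := fun w => smul_zero w
  neg_mem' := fun {a} ha w => by rw [smul_neg, ha w]

end Stmt15

open DirectSum
open scoped HomogeneousIdeal

section GradedRing

variable {R : Type*} [CommRing R] (𝒜 : ℕ → AddSubgroup R) [GradedRing 𝒜]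

theorem decompose_mul_eq_zero_of_lt {x y : R} {p q : ℕ}
    (hx : ∀ i < p, (decompose 𝒜 x i : R) = 0) (hy : ∀ j < q, (decompose 𝒜 y j : R) = 0)
    {n : ℕ} (hn : n < p + q) : (decompose 𝒜 (x * y) n : R) = 0 := by
  rw [decompose_mul, coe_mul_apply_eq_sum_antidiagonal]
  refine Finset.sum_eq_zero fun ij hij => ?_
  rw [Finset.HasAntidiagonal.mem_antidiagonal] at hij
  rcases lt_or_ge ij.1 p with h | h
  · rw [hx _ h, zero_mul]
  · rw [hy _ (by omega), mul_zero]

theorem decompose_eq_zero_of_mem_irrelevant_pow {q : ℕ} {r : R} (hr : r ∈ (𝒜₊).toIdeal ^ q) :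
    ∀ i < q, (decompose 𝒜 r i : R) = 0 := by
  induction q generalizing r with
  | zero => intro i hi; omega
  | succ q ih =>
    rw [pow_succ] at hr
    refine Submodule.mul_induction_on hr (fun x hx y hy => ?_) (fun x y hx hy i hi => ?_)
    · refine fun i => decompose_mul_eq_zero_of_lt 𝒜 (ih hx) (fun j hj => ?_)
      rw [Nat.lt_one_iff.mp hj]
      exact hy
    · rw [decompose_add, DirectSum.add_apply, AddSubgroup.coe_add, hx i hi, hy i hi, add_zero]

instance isHausdorff_irrelevant : IsHausdorff (𝒜₊).toIdeal R where
  haus' r hr := by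
    have hcomp (i : ℕ) : decompose 𝒜 r i = 0 := by
      have := SModEq.zero.mp (hr (i + 1))
      rw [smul_eq_mul, Ideal.mul_top] at this
      exact Subtype.ext (decompose_eq_zero_of_mem_irrelevant_pow 𝒜 this i (by omega))
    exact (decompose 𝒜).injective (by ext i : 1; simp [hcomp])

end GradedRing

section Adic

variable {R V P : Type*} [CommRing R] [AddCommGroup V] [Module R V] [AddCommGroup P] [Module R P]

theorem Module.Basis.repr_mem_of_mem_smul_top {ι : Type*} (b : Module.Basis ι R V) {I : Ideal R}
    {v : V} (hv : v ∈ I • (⊤ : Submodule R V)) (i : ι) : b.repr v i ∈ I := by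
  refine Submodule.smul_induction_on hv (fun r hr u _ => ?_) (fun x y hx hy => ?_)
  · simpa using I.mul_mem_right _ hr
  · simpa using I.add_mem hx hy

theorem IsHausdorff.of_basis {ι : Type*} (b : Module.Basis ι R V) (I : Ideal R) [IsHausdorff I R] :
    IsHausdorff I V where
  haus' v hv := b.repr.injective <| Finsupp.ext fun i => by
    rw [map_zero, Finsupp.zero_apply]
    refine IsHausdorff.haus ‹_› _ fun n => SModEq.zero.mpr ?_
    rw [smul_eq_mul, Ideal.mul_top]
    simpa using b.repr_mem_of_mem_smul_top (SModEq.zero.mp (hv n)) i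

theorem LinearMap.ker_le_smul_ker_of_le_smul_top [Module.Projective R P] {f : V →ₗ[R] P}
    (hf : Function.Surjective f) {I : Ideal R} (hker : ker f ≤ I • ⊤) : ker f ≤ I • ker f := by
  obtain ⟨σ, hσ⟩ := Module.projective_lifting_property f LinearMap.id hf
  -- `e` is a projection of `V` onto `ker f`, hence maps `I • V` into `I • ker f`
  let e : V →ₗ[R] V := LinearMap.id - σ ∘ₗ f
  have he : ∀ v, f (e v) = 0 := fun v => by
    simp [e, ← LinearMap.comp_apply f σ, hσ]
  intro v hv
  have hev : e v = v := by simp [e, LinearMap.mem_ker.mp hv]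
  have : e v ∈ (I • ⊤ : Submodule R V).map e := Submodule.mem_map_of_mem (hker hv)
  rw [Submodule.map_smul'', hev] at this
  exact Submodule.smul_mono le_rfl (by rintro _ ⟨u, -, rfl⟩; exact he u) this

theorem LinearMap.ker_eq_bot_of_le_smul_top [Module.Projective R P] {f : V →ₗ[R] P}
    (hf : Function.Surjective f) {I : Ideal R} [IsHausdorff I V] (hker : ker f ≤ I • ⊤) :
    ker f = ⊥ := by
  have hpow (n : ℕ) : ker f ≤ I ^ n • ⊤ := by
    induction n with
    | zero => simp
    | succ n ih =>
      calc ker f ≤ I • ker f := ker_le_smul_ker_of_le_smul_top hf hker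
        _ ≤ I • I ^ n • ⊤ := Submodule.smul_mono le_rfl ih
        _ = I ^ (n + 1) • ⊤ := by rw [← Submodule.smul_assoc, smul_eq_mul, pow_succ']
  exact eq_bot_iff.mpr <| (le_iInf hpow).trans (IsHausdorff.iInf_pow_smul ‹_›).le

end Adic

theorem exists_finset_isHomogeneousElem_span_eq_top {ι A M : Type*} [DecidableEq ι] [Semiring A]
    [AddCommGroup M] [Module A M] (ℳ : ι → AddSubgroup M) [Decomposition ℳ] [Module.Finite A M] :
    ∃ G : Finset M,
      (∀ g ∈ G, SetLike.IsHomogeneousElem ℳ g) ∧ Submodule.span A (G : Set M) = ⊤ := by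
  classical
  obtain ⟨T, hT⟩ := Module.Finite.fg_top (R := A) (M := M)
  refine ⟨T.biUnion fun x => (decompose ℳ x).support.image fun i => (decompose ℳ x i : M),
    fun g hg => ?_, ?_⟩
  · obtain ⟨x, -, hg⟩ := Finset.mem_biUnion.mp hg
    obtain ⟨i, -, rfl⟩ := Finset.mem_image.mp hg
    exact ⟨i, (decompose ℳ x i).2⟩
  · rw [eq_top_iff, ← hT, Submodule.span_le]
    intro x hx
    rw [← sum_support_decompose ℳ x]
    exact Submodule.sum_mem _ fun i hi => Submodule.subset_span <|
      Finset.mem_biUnion.mpr ⟨x, hx, Finset.mem_image_of_mem _ hi⟩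

section HomogeneousSubring

variable {R : Type*} [CommRing R] {𝒜 : ℕ → AddSubgroup R} [GradedRing 𝒜]
  {S : Subring R} (hS : SetLike.IsHomogeneous 𝒜 S)

def homogeneousComponent (i : ℕ) (s : S) : S := ⟨decompose 𝒜 s i, hS i s.2⟩

variable {M : Type*} [AddCommGroup M] [Module S M] {ℳ : ℕ → AddSubgroup M} [Decomposition ℳ]
  (hMsmul : ∀ i j : ℕ, ∀ r : S, (r : R) ∈ 𝒜 i → ∀ m ∈ ℳ j, r • m ∈ ℳ (i + j))
include hS hMsmul

theorem coe_decompose_smul_mem {N : Submodule S M} (s : S) (u : M) (j : ℕ)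
    (h : ∀ i k, i + k = j → homogeneousComponent hS i s • (decompose ℳ u k : M) ∈ N) :
    (decompose ℳ (s • u) j : M) ∈ N := by
  classical
  have hs : ∑ i ∈ (decompose 𝒜 (s : R)).support, homogeneousComponent hS i s = s :=
    Subtype.ext <| by
      push_cast [homogeneousComponent]
      exact sum_support_decompose 𝒜 (s : R)
  rw [← hs, ← sum_support_decompose ℳ u, Finset.sum_smul]
  simp_rw [Finset.smul_sum]
  have hadd (x y : M) (hx : (decompose ℳ x j : M) ∈ N) (hy : (decompose ℳ y j : M) ∈ N) :
      (decompose ℳ (x + y) j : M) ∈ N := by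
    rw [decompose_add, DirectSum.add_apply, AddSubgroup.coe_add]
    exact N.add_mem hx hy
  refine Finset.sum_induction _ _ hadd (by simp) fun i _ => ?_
  refine Finset.sum_induction _ _ hadd (by simp) fun k _ => ?_
  have hmem :=
    hMsmul i k (homogeneousComponent hS i s) (decompose 𝒜 (s : R) i).2 _ (decompose ℳ u k).2
  obtain rfl | hne := eq_or_ne (i + k) j
  · rw [decompose_of_mem_same ℳ hmem]
    exact h i k rfl
  · rw [decompose_of_mem_ne ℳ hmem hne]
    exact N.zero_mem

theorem isHomogeneous_span {T : Set M} (hT : ∀ x ∈ T, SetLike.IsHomogeneousElem ℳ x) :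
    (Submodule.span S T).IsHomogeneous ℳ := by
  intro j x hx
  induction hx using Submodule.span_induction generalizing j with
  | mem x hx =>
    obtain ⟨i, hi⟩ := hT x hx
    obtain rfl | hne := eq_or_ne i j
    · rw [decompose_of_mem_same ℳ hi]
      exact Submodule.subset_span hx
    · rw [decompose_of_mem_ne ℳ hi hne]
      exact Submodule.zero_mem _
  | zero => simp
  | add x y _ _ hx hy =>
    rw [decompose_add, DirectSum.add_apply, AddSubgroup.coe_add]
    exact Submodule.add_mem _ (hx j) (hy j)
  | smul s x _ hx =>
    exact coe_decompose_smul_mem hS hMsmul s x j fun i k _ => Submodule.smul_mem _ _ (hx k)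

theorem Submodule.IsHomogeneous.eq_top_of_sup_irrelevant_smul_eq_top {N : Submodule S M}
    (hN : N.IsHomogeneous ℳ) (hsup : N ⊔ (𝒜₊).toIdeal.comap S.subtype • ⊤ = ⊤) : N = ⊤ := by
  have hdeg (j : ℕ) : ∀ x ∈ ℳ j, x ∈ N := by
    induction j using Nat.strong_induction_on with
    | _ j ih =>
      intro x hxj
      obtain ⟨y, hy, z, hz, rfl⟩ := Submodule.mem_sup.mp (hsup ▸ Submodule.mem_top (x := x))
      rw [← decompose_of_mem_same ℳ hxj, decompose_add, DirectSum.add_apply, AddSubgroup.coe_add]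
      refine N.add_mem (hN j hy) ?_
      refine Submodule.smul_induction_on hz (fun s hs u _ => ?_) (fun a b ha hb => ?_)
      · refine coe_decompose_smul_mem hS hMsmul s u j fun i k hik => ?_
        rcases Nat.eq_zero_or_pos i with rfl | hi
        · have h0 : homogeneousComponent hS 0 s = 0 := Subtype.ext hs
          rw [h0, zero_smul]
          exact N.zero_mem
        · exact N.smul_mem _ (ih k (by omega) _ (decompose ℳ u k).2)
      · rw [decompose_add, DirectSum.add_apply, AddSubgroup.coe_add]
        exact N.add_mem ha hb
  refine eq_top_iff.mpr fun x _ => ?_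
  classical
  rw [← sum_support_decompose ℳ x]
  exact N.sum_mem fun j _ => hdeg j _ (decompose ℳ x j).2

theorem mem_irrelevant_of_sum_smul_eq_zero (hunit : ∀ s : S, (s : R) ∈ 𝒜 0 → s ≠ 0 → IsUnit s)
    {G : Finset M} (hG : ∀ g ∈ G, SetLike.IsHomogeneousElem ℳ g)
    (hGspan : Submodule.span S (G : Set M) = ⊤)
    (hmin : ∀ G' : Finset M, (∀ g ∈ G', SetLike.IsHomogeneousElem ℳ g) →
      Submodule.span S (G' : Set M) = ⊤ → G.card ≤ G'.card)
    {a : G → S} (ha : ∑ g, a g • (g : M) = 0) (g : G) :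
    a g ∈ (𝒜₊).toIdeal.comap S.subtype := by
  classical
  by_contra hag
  set c := homogeneousComponent hS 0 (a g)
  have hc : IsUnit c := hunit c (decompose 𝒜 _ 0).2 fun h => hag (congrArg Subtype.val h)
  have hac : a g - c ∈ (𝒜₊).toIdeal.comap S.subtype := by
    show (decompose 𝒜 ((a g : R) - c) 0 : R) = 0
    rw [decompose_sub, DirectSum.sub_apply, AddSubgroup.coe_sub,
      decompose_of_mem_same 𝒜 (show (c : R) ∈ 𝒜 0 from (decompose 𝒜 (a g : R) 0).2)]
    exact sub_self _
  set N := Submodule.span S ((G.erase g : Finset M) : Set M)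
  have hrest : ∑ x ∈ Finset.univ.erase g, a x • (x : M) ∈ N :=
    N.sum_mem fun x hx => N.smul_mem _ <| Submodule.subset_span <|
      Finset.mem_erase.mpr ⟨fun h => (Finset.mem_erase.mp hx).1 (Subtype.ext h), x.2⟩
  have hcg : c • (g : M) = -∑ x ∈ Finset.univ.erase g, a x • (x : M) - (a g - c) • (g : M) := by
    rw [← Finset.add_sum_erase _ _ (Finset.mem_univ g)] at ha
    linear_combination (norm := module) ha
  have hg : (g : M) ∈ N ⊔ (𝒜₊).toIdeal.comap S.subtype • ⊤ := by
    rw [← Submodule.smul_mem_iff_of_isUnit _ hc, hcg]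
    exact sub_mem (Submodule.mem_sup_left (neg_mem hrest))
      (Submodule.mem_sup_right (Submodule.smul_mem_smul hac Submodule.mem_top))
  have hN : N = ⊤ := by
    refine (isHomogeneous_span hS hMsmul fun x hx => hG x (Finset.mem_of_mem_erase hx))
      |>.eq_top_of_sup_irrelevant_smul_eq_top hS hMsmul ?_
    refine top_unique <| hGspan.symm.trans_le <| Submodule.span_le.mpr fun x hx => ?_
    rcases eq_or_ne x g with rfl | hxg
    · exact hg
    · exact Submodule.mem_sup_left (Submodule.subset_span (Finset.mem_erase.mpr ⟨hxg, hx⟩))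
  exact (Finset.card_erase_lt_of_mem g.2).not_ge
    (hmin _ (fun x hx => hG x (Finset.mem_of_mem_erase hx)) hN)

end HomogeneousSubring

section BaseChange

variable {A B N F : Type*} [CommRing A] [CommRing B] [Algebra A B]
  [AddCommGroup N] [Module A N] [AddCommGroup F] [Module A F]

theorem mem_smul_top_of_forall_mem {ι : Type*} [Fintype ι] {I : Ideal A} {a : ι → A}
    (ha : ∀ i, a i ∈ I) : a ∈ I • (⊤ : Submodule A (ι → A)) := by
  classical
  rw [pi_eq_sum_univ a]
  exact Submodule.sum_mem _ fun i _ => Submodule.smul_mem_smul (ha i) Submodule.mem_top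

theorem LinearMap.range_baseChange_le_smul_top (f : N →ₗ[A] F) {I : Ideal A}
    (hf : range f ≤ I • ⊤) : range (f.baseChange B) ≤ I.map (algebraMap A B) • ⊤ := by
  have htmul (b : B) {y : F} (hy : y ∈ I • (⊤ : Submodule A F)) :
      b ⊗ₜ[A] y ∈ I.map (algebraMap A B) • (⊤ : Submodule B (B ⊗[A] F)) := by
    refine Submodule.smul_induction_on hy (fun r hr y _ => ?_) (fun y z hy hz => ?_)
    · rw [TensorProduct.tmul_smul, ← algebraMap_smul B r]
      exact Submodule.smul_mem_smul (Ideal.mem_map_of_mem _ hr) Submodule.mem_top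
    · rw [TensorProduct.tmul_add]
      exact Submodule.add_mem _ hy hz
  rintro _ ⟨x, rfl⟩
  induction x using TensorProduct.induction_on with
  | zero => simp
  | tmul b n => exact htmul b (hf ⟨n, rfl⟩)
  | add x y hx hy => rw [map_add]; exact Submodule.add_mem _ hx hy

theorem LinearMap.ker_baseChange_le_smul_top {f : F →ₗ[A] N} (hf : Function.Surjective f)
    {I : Ideal A} (hker : ker f ≤ I • ⊤) : ker (f.baseChange B) ≤ I.map (algebraMap A B) • ⊤ := by
  intro v hv
  have hexact := lTensor_exact B (LinearMap.exact_subtype_ker_map f) hf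
  obtain ⟨w, rfl⟩ := (hexact v).mp (by rwa [← baseChange_eq_ltensor])
  rw [← baseChange_eq_ltensor]
  exact range_baseChange_le_smul_top _ (by simpa using hker) ⟨w, rfl⟩

end BaseChange

theorem free_of_projective_baseChange {R : Type*} [CommRing R] {𝒜 : ℕ → AddSubgroup R}
    [GradedRing 𝒜] {S : Subring R} (hS : SetLike.IsHomogeneous 𝒜 S)
    (hunit : ∀ s : S, (s : R) ∈ 𝒜 0 → s ≠ 0 → IsUnit s)
    {M : Type*} [AddCommGroup M] [Module S M] [Module.Finite S M]
    {ℳ : ℕ → AddSubgroup M} [Decomposition ℳ]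
    (hMsmul : ∀ i j : ℕ, ∀ r : S, (r : R) ∈ 𝒜 i → ∀ m ∈ ℳ j, r • m ∈ ℳ (i + j))
    [Module.Projective R (R ⊗[S] M)] : Module.Free S M := by
  obtain ⟨G, ⟨hG, hGspan⟩, hmin⟩ := (measure Finset.card).wf.has_min
    {G : Finset M | (∀ g ∈ G, SetLike.IsHomogeneousElem ℳ g) ∧ Submodule.span S (G : Set M) = ⊤}
    (exists_finset_isHomogeneousElem_span_eq_top ℳ)
  let φ := Fintype.linearCombination S ((↑) : G → M)
  have hφ : Function.Surjective φ := by
    rwa [← span_range_eq_top_iff_surjective_fintypeLinearCombination, Subtype.range_coe]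
  have hker : LinearMap.ker φ ≤ (𝒜₊).toIdeal.comap S.subtype • ⊤ := fun a ha =>
    mem_smul_top_of_forall_mem <| mem_irrelevant_of_sum_smul_eq_zero hS hMsmul hunit hG hGspan
      (fun G' hG' hG'span => not_lt.mp (hmin G' ⟨hG', hG'span⟩)) ha
  have : IsHausdorff (𝒜₊).toIdeal (R ⊗[S] (G → S)) :=
    .of_basis ((Pi.basisFun S G).baseChange R) _
  have hkerR : LinearMap.ker (φ.baseChange R) = ⊥ :=
    LinearMap.ker_eq_bot_of_le_smul_top (φ.baseChange_surjective R hφ)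
      ((LinearMap.ker_baseChange_le_smul_top hφ hker).trans
        (Submodule.smul_mono_left Ideal.map_comap_le))
  have hφinj : Function.Injective φ := fun a a' h =>
    Algebra.TensorProduct.includeRight_injective (A := R) Subtype.val_injective <|
      LinearMap.ker_eq_bot.mp hkerR <| by simp [LinearMap.baseChange_tmul, h]
  exact .of_equiv (LinearEquiv.ofBijective φ ⟨hφinj, hφ⟩)

namespace Stmt15

section FixedSubring

variable {W R : Type*} [Monoid W] [CommRing R] [MulSemiringAction W R]

theorem smul_coe_decompose (𝒜 : ℕ → AddSubgroup R) [GradedRing 𝒜]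
    (hgraded : ∀ (w : W) (i : ℕ), ∀ x ∈ 𝒜 i, w • x ∈ 𝒜 i) (w : W) (r : R) (i : ℕ) :
    w • (decompose 𝒜 r i : R) = decompose 𝒜 (w • r) i :=
  GradedRingHom.map_directSumDecompose (𝒜 := 𝒜) (ℬ := 𝒜)
    ⟨MulSemiringAction.toRingHom W R w, fun hx => hgraded w _ _ hx⟩

theorem isHomogeneous_fixedSubring (𝒜 : ℕ → AddSubgroup R) [GradedRing 𝒜]
    (hgraded : ∀ (w : W) (i : ℕ), ∀ x ∈ 𝒜 i, w • x ∈ 𝒜 i) :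
    SetLike.IsHomogeneous 𝒜 (fixedSubring W R) := fun i r hr w => by
  rw [smul_coe_decompose 𝒜 hgraded, hr w]

theorem mem_fixedSubring_of_mul_eq_one {r y : R} (hr : r ∈ fixedSubring W R) (hy : r * y = 1) :
    y ∈ fixedSubring W R := fun w =>
  left_inv_eq_right_inv (a := r) (by rw [← hr w, ← smul_mul', mul_comm y r, hy, smul_one]) hy

end FixedSubring

theorem free_descent_general
    (R : Type*) [CommRing R] (𝒜 : ℕ → AddSubgroup R) [GradedRing 𝒜]
    (hfield : ∀ x ∈ 𝒜 0, x ≠ 0 → ∃ y ∈ 𝒜 0, x * y = 1)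
    (W : Type*) [Group W] [MulSemiringAction W R]
    (hgraded : ∀ (w : W) (i : ℕ), ∀ x ∈ 𝒜 i, w • x ∈ 𝒜 i)
    (M : Type*) [AddCommGroup M] [Module (fixedSubring W R) M]
    [Module.Finite (fixedSubring W R) M]
    (ℳ : ℕ → AddSubgroup M) [DirectSum.Decomposition ℳ]
    (hMsmul : ∀ i j : ℕ, ∀ r : fixedSubring W R, (r : R) ∈ 𝒜 i →
      ∀ m ∈ ℳ j, r • m ∈ ℳ (i + j))
    (hbase : Module.Free R (R ⊗[fixedSubring W R] M)) :
    Module.Free (fixedSubring W R) M := by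
  have hunit (s : fixedSubring W R) (hs : (s : R) ∈ 𝒜 0) (hs0 : s ≠ 0) : IsUnit s := by
    obtain ⟨y, -, hy⟩ := hfield s hs fun h => hs0 (Subtype.ext h)
    exact .of_mul_eq_one ⟨y, mem_fixedSubring_of_mul_eq_one s.2 hy⟩ (Subtype.ext hy)
  exact free_of_projective_baseChange (isHomogeneous_fixedSubring 𝒜 hgraded) hunit hMsmul

/-- Descent of freeness along the inclusion `R^W ⊆ R`: let `R` be an `ℕ`-graded
commutative ring with `R₀` a field, `W` a finite group acting on `R` by graded ring
automorphisms, with `R` free over the invariant ring `R^W`.  If `M` is a finitely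
generated graded `R^W`-module such that `M ⊗_{R^W} R` is a free `R`-module, then `M`
is a free `R^W`-module. -/
theorem free_descent
    (R : Type*) [CommRing R] (𝒜 : ℕ → AddSubgroup R) [GradedRing 𝒜]
    (hfield : ∀ x ∈ 𝒜 0, x ≠ 0 → ∃ y ∈ 𝒜 0, x * y = 1)
    (W : Type*) [Group W] [Finite W] [MulSemiringAction W R]
    (hgraded : ∀ (w : W) (i : ℕ), ∀ x ∈ 𝒜 i, w • x ∈ 𝒜 i)
    (hRfree : Module.Free (fixedSubring W R) R)
    (M : Type*) [AddCommGroup M] [Module (fixedSubring W R) M]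
    [Module.Finite (fixedSubring W R) M]
    (ℳ : ℕ → AddSubgroup M) [DirectSum.Decomposition ℳ]
    (hMsmul : ∀ i j : ℕ, ∀ r : fixedSubring W R, (r : R) ∈ 𝒜 i →
      ∀ m ∈ ℳ j, r • m ∈ ℳ (i + j))
    (hbase : Module.Free R (R ⊗[fixedSubring W R] M)) :
    Module.Free (fixedSubring W R) M :=
  free_descent_general R 𝒜 hfield W hgraded M ℳ hMsmul hbase

end Stmt15
end

section
/- Let R be a commutative ring and M an R-module which is finitely generated and torsion-free over an integral domain R. Suppose i : N → M is an R-linear map, F ⊂ R a multiplicative set with 0 ∉ F, such that the localized map i_F : N_F → M_F is an isomorphism, and suppose the composite K_T : P → Hom_R(M, R) is an isomorphism and K'_T : P' → Hom_R(N, R) is an isomorphism, with a commutative square relating P → P' to the transposes. If M and N are finitely generated, then the induced map P → P' becomes an isomorphism after localizing at F, and P → P' is injective. -/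
/-!
Multiplying by a single `s ∈ F` pushes all of the finitely generated module `M` into the range
of `i`, and the kernel of `i` is torsion. Hence every functional on `N` extends to `M` after
multiplication by `s`, and a functional on `M` vanishing on the range of `i` vanishes on `s • M`,
hence on `M` since `R` is a domain. Through `K` and `K'` this says that `g` is injective and that
`s` multiplies `P'` into the range of `g`, which makes `g` bijective after inverting `F`.
-/

open Module Submodule
open scoped nonZeroDivisors

namespace LocalizedModule

variable {R M N : Type*} [CommRing R] [AddCommGroup M] [Module R M] [AddCommGroup N] [Module R N]
  (F : Submonoid R) (f : N →ₗ[R] M)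

theorem exists_smul_mem_range_of_surjective_map [Module.Finite R M]
    (hf : Function.Surjective (map F f)) : ∃ s : F, ∀ m : M, (s : R) • m ∈ LinearMap.range f := by
  have hcoker := (LinearMap.localizedMap_surjective_iff_subsingleton_localized_coker F f).mp hf
  obtain ⟨s, hs⟩ := Module.Finite.exists_smul_of_comp_eq_of_isLocalizedModule F
    (mkLinearMap F (M ⧸ LinearMap.range f)) (LinearMap.range f).mkQ 0 (Subsingleton.elim _ _)
  refine ⟨s, fun m => ?_⟩
  rw [← Quotient.mk_eq_zero, Quotient.mk_smul]
  simpa [Submonoid.smul_def] using LinearMap.congr_fun hs m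

theorem surjective_map_of_smul_mem_range {s : R} (hs : s ∈ F)
    (hf : ∀ m : M, s • m ∈ LinearMap.range f) : Function.Surjective (map F f) := by
  rw [LinearMap.localizedMap_surjective_iff_subsingleton_localized_coker, subsingleton_iff]
  rintro ⟨m⟩
  exact ⟨s, hs, (Quotient.mk_eq_zero _).mpr (hf m)⟩

theorem ker_le_torsion_of_injective_map (hF : F ≤ R⁰) (hf : Function.Injective (map F f)) :
    LinearMap.ker f ≤ torsion R N := by
  intro n hn
  have hn' : mkLinearMap F N n = 0 := hf <| by
    rw [mkLinearMap_apply, map_mk, LinearMap.mem_ker.mp hn, zero_mk, map_zero]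
  obtain ⟨r, hr, hrn⟩ := mem_ker_mkLinearMap_iff.mp hn'
  exact ⟨⟨r, hF hr⟩, hrn⟩

end LocalizedModule

theorem Module.Dual.torsion_le_ker {R N : Type*} [CommRing R] [AddCommGroup N] [Module R N]
    (ψ : Dual R N) : torsion R N ≤ LinearMap.ker ψ := by
  rintro n ⟨a, ha⟩
  rw [Submonoid.smul_def] at ha
  have : (a : R) * ψ n = 0 := by rw [← smul_eq_mul, ← map_smul, ha, map_zero]
  exact (mul_left_mem_nonZeroDivisors_eq_zero_iff a.2).mp this

namespace LinearMap

variable {R M N : Type*} [CommRing R] [AddCommGroup M] [Module R M] [AddCommGroup N] [Module R N]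
  {f : N →ₗ[R] M} {s : R}

theorem dualMap_injective_of_smul_mem_range (hs : s ∈ R⁰) (hf : ∀ m : M, s • m ∈ range f) :
    Function.Injective f.dualMap := by
  rw [← ker_eq_bot, eq_bot_iff]
  intro φ hφ
  ext m
  obtain ⟨n, hn⟩ := hf m
  have : s * φ m = 0 := by
    rw [← smul_eq_mul, ← map_smul, ← hn, ← dualMap_apply, mem_ker.mp hφ, zero_apply]
  simpa using (mul_left_mem_nonZeroDivisors_eq_zero_iff hs).mp this

theorem smul_mem_range_dualMap (hker : ker f ≤ torsion R N) (hf : ∀ m : M, s • m ∈ range f)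
    (ψ : Dual R N) : s • ψ ∈ range f.dualMap := by
  let ψ' : range f →ₗ[R] R :=
    (ker f).liftQ ψ (hker.trans ψ.torsion_le_ker) ∘ₗ (quotKerEquivRange f).symm.toLinearMap
  have hψ' : ∀ n, ψ' ⟨f n, mem_range_self f n⟩ = ψ n := fun n => by
    simp [ψ', quotKerEquivRange_symm_apply_image]
  refine ⟨ψ' ∘ₗ (s • LinearMap.id).codRestrict (range f) hf, ?_⟩
  ext n
  calc ψ' ((s • LinearMap.id).codRestrict (range f) hf (f n))
      = ψ' ⟨f (s • n), mem_range_self f _⟩ := congrArg ψ' (Subtype.ext (by simp))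
    _ = s * ψ n := by rw [hψ', map_smul, smul_eq_mul]

end LinearMap

theorem kronecker_localization_general
    (R : Type*) [CommRing R] [IsDomain R]
    (M N P P' : Type*)
    [AddCommGroup M] [Module R M] [AddCommGroup N] [Module R N]
    [AddCommGroup P] [Module R P] [AddCommGroup P'] [Module R P']
    [Module.Finite R M]
    (i : N →ₗ[R] M) (F : Submonoid R) (h0 : (0 : R) ∉ F)
    (hloc : Function.Bijective (LocalizedModule.map F i))
    (K : P ≃ₗ[R] (M →ₗ[R] R)) (K' : P' ≃ₗ[R] (N →ₗ[R] R))
    (g : P →ₗ[R] P')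
    (hsq : ∀ p : P, K' (g p) = (K p).comp i) :
    Function.Bijective (LocalizedModule.map F g) ∧ Function.Injective g := by
  have hF : F ≤ R⁰ := le_nonZeroDivisors_of_noZeroDivisors h0
  obtain ⟨s, hs⟩ := LocalizedModule.exists_smul_mem_range_of_surjective_map F i hloc.2
  have hg : ∀ p, g p = K'.symm (i.dualMap (K p)) := fun p => K'.eq_symm_apply.mpr (hsq p)
  have hg_inj : Function.Injective g := by
    rw [show ⇑g = K'.symm ∘ i.dualMap ∘ K from funext hg]
    exact K'.symm.injective.comp
      ((LinearMap.dualMap_injective_of_smul_mem_range (hF s.2) hs).comp K.injective)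
  have hg_range : ∀ p' : P', (s : R) • p' ∈ LinearMap.range g := by
    intro p'
    obtain ⟨φ, hφ⟩ := LinearMap.smul_mem_range_dualMap
      (LocalizedModule.ker_le_torsion_of_injective_map F i hF hloc.1) hs (K' p')
    exact ⟨K.symm φ, by rw [hg, K.apply_symm_apply, hφ, map_smul, K'.symm_apply_apply]⟩
  exact ⟨⟨LocalizedModule.map_injective F g hg_inj,
    LocalizedModule.surjective_map_of_smul_mem_range F g s.2 hg_range⟩, hg_inj⟩

/-- Abstract form of the localization theorem for equivariant Kronecker duality schemes:
over a domain `R`, suppose `i : N → M` is a map of finitely generated modules which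
becomes an isomorphism after localization at a multiplicative set `F` with `0 ∉ F`,
and suppose `P` and `P'` are identified, via Kronecker duality isomorphisms `K`, `K'`,
with `Hom_R(M,R)` and `Hom_R(N,R)` in such a way that `g : P → P'` corresponds to the
transpose of `i`.  Then `g` becomes an isomorphism after localization at `F`, and `g`
is injective. -/
theorem kronecker_localization
    (R : Type*) [CommRing R] [IsDomain R]
    (M N P P' : Type*)
    [AddCommGroup M] [Module R M] [AddCommGroup N] [Module R N]
    [AddCommGroup P] [Module R P] [AddCommGroup P'] [Module R P']
    [Module.Finite R M] [Module.Finite R N]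
    (i : N →ₗ[R] M) (F : Submonoid R) (h0 : (0 : R) ∉ F)
    (hloc : Function.Bijective (LocalizedModule.map F i))
    (K : P ≃ₗ[R] (M →ₗ[R] R)) (K' : P' ≃ₗ[R] (N →ₗ[R] R))
    (g : P →ₗ[R] P')
    (hsq : ∀ p : P, K' (g p) = (K p).comp i) :
    Function.Bijective (LocalizedModule.map F g) ∧ Function.Injective g :=
  kronecker_localization_general R M N P P' i F h0 hloc K K' g hsq
end

section
/- Let k be an algebraically closed field, X an affine scheme of finite type over k with an action of a torus T, and H a closed subgroup of T. Then the ideal I ⊂ k[X] of the fixed point subscheme X^H equals the ideal J generated by all regular functions f ∈ k[X] that are T-eigenvectors whose weight restricts non-trivially to H. -/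
/-! The ideal `J` spanned by the eigenvectors of weights nontrivial on `H` contains
`h • a - a = ∑_χ (h(χ) - 1) a_χ` for every `h ∈ H`, so it is one of the ideals in the
infimum. Conversely, an ideal `I` on whose quotient `H` acts trivially contains
`h • x - x = (h(χ) - 1) x` for an eigenvector `x` of weight `χ`, hence contains `x` as soon
as `h(χ) ≠ 1`. -/

open scoped Classical DirectSum

noncomputable section

namespace Stmt18

variable {k : Type*} [Field k] {A : Type*} [CommRing A] [Algebra k A]
variable {Δ : Type*} [AddCommGroup Δ] [DecidableEq Δ]

/-- The action of a point `h` of the torus `T = Hom(Δ, kˣ)` on a `Δ`-graded algebra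
`A` (the algebraic incarnation of a rational `T`-action): `h` scales the component of
weight `χ` by `h(χ)`. -/
def act (𝒜 : Δ → Submodule k A) [GradedAlgebra 𝒜]
    (h : Multiplicative Δ →* kˣ) (a : A) : A :=
  (DirectSum.decompose 𝒜 a).sum fun χ x => ((h (Multiplicative.ofAdd χ) : kˣ) : k) • (x : A)

section

variable (𝒜 : Δ → Submodule k A) [GradedAlgebra 𝒜] (h : Multiplicative Δ →* kˣ)

lemma act_of_mem {χ : Δ} {x : A} (hx : x ∈ 𝒜 χ) :
    act 𝒜 h x = ((h (Multiplicative.ofAdd χ) : kˣ) : k) • x := by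
  rw [act, DirectSum.decompose_of_mem 𝒜 hx]
  exact DFinsupp.sum_single_index (by simp)

lemma act_sub_self (a : A) :
    act 𝒜 h a - a = ∑ χ ∈ (DirectSum.decompose 𝒜 a).support,
      (((h (Multiplicative.ofAdd χ) : kˣ) : k) - 1) • (DirectSum.decompose 𝒜 a χ : A) := by
  simp only [sub_smul, one_smul, Finset.sum_sub_distrib, DirectSum.sum_support_decompose]
  rfl

lemma act_sub_self_mem {I : Ideal A}
    (hI : ∀ χ, h (Multiplicative.ofAdd χ) ≠ 1 → (𝒜 χ : Set A) ⊆ I) (a : A) :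
    act 𝒜 h a - a ∈ I := by
  rw [act_sub_self]
  refine Ideal.sum_mem _ fun χ _ => ?_
  by_cases hχ : h (Multiplicative.ofAdd χ) = 1
  · simp [hχ]
  · exact Submodule.smul_of_tower_mem _ _ (hI χ hχ (DirectSum.decompose 𝒜 a χ).2)

lemma mem_of_act_sub_self_mem {I : Ideal A} {χ : Δ} {x : A} (hx : x ∈ 𝒜 χ)
    (hχ : h (Multiplicative.ofAdd χ) ≠ 1) (hI : act 𝒜 h x - x ∈ I) : x ∈ I := by
  set c : k := ((h (Multiplicative.ofAdd χ) : kˣ) : k)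
  have hc : c - 1 ≠ 0 := sub_ne_zero.mpr (Units.val_eq_one.not.mpr hχ)
  rw [act_of_mem 𝒜 h hx] at hI
  have hscaled : (c - 1) • x ∈ I := by rwa [sub_smul, one_smul]
  simpa [smul_smul, inv_mul_cancel₀ hc] using Submodule.smul_of_tower_mem I (c - 1)⁻¹ hscaled

end

theorem fixed_ideal_eq_span_general
    (𝒜 : Δ → Submodule k A) [GradedAlgebra 𝒜]
    (H : Subgroup (Multiplicative Δ →* kˣ)) :
    sInf {I : Ideal A |
        (∀ h ∈ H, ∀ a ∈ I, act 𝒜 h a ∈ I) ∧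
        (∀ h ∈ H, ∀ a : A, act 𝒜 h a - a ∈ I)} =
      Ideal.span (⋃ χ ∈ {χ : Δ | ∃ h ∈ H, h (Multiplicative.ofAdd χ) ≠ 1},
        (𝒜 χ : Set A)) := by
  set J := Ideal.span (⋃ χ ∈ {χ : Δ | ∃ h ∈ H, h (Multiplicative.ofAdd χ) ≠ 1},
    (𝒜 χ : Set A))
  have act_sub_self_mem_J : ∀ h ∈ H, ∀ a : A, act 𝒜 h a - a ∈ J := fun h hh =>
    act_sub_self_mem 𝒜 h fun χ hχ _ hx => Ideal.subset_span (Set.mem_biUnion ⟨h, hh, hχ⟩ hx)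
  refine le_antisymm (sInf_le ⟨fun h hh a ha => ?_, act_sub_self_mem_J⟩) (le_sInf fun I hI => ?_)
  · simpa using J.add_mem (act_sub_self_mem_J h hh a) ha
  · refine Ideal.span_le.mpr fun x hx => ?_
    obtain ⟨χ, ⟨h, hh, hχ⟩, hx⟩ := Set.mem_iUnion₂.mp hx
    exact mem_of_act_sub_self_mem 𝒜 h hx hχ (hI.2 h hh x)

/-- Let `X` be an affine scheme of finite type over an algebraically closed field `k`
with an action of a torus `T` (encoded by the grading of `k[X] = A` over the character
group `Δ` of `T`), and let `H` be a closed subgroup of `T` (a subgroup of the group of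
`k`-points `Hom(Δ, kˣ)`).  Then the ideal of the fixed point subscheme `X^H` — the
smallest `H`-stable ideal of `A` with `H` acting trivially on the quotient — equals the
ideal generated by all `T`-eigenvectors whose weight restricts non-trivially to `H`. -/
theorem fixed_ideal_eq_span
    [IsAlgClosed k] [Algebra.FiniteType k A]
    (𝒜 : Δ → Submodule k A) [GradedAlgebra 𝒜]
    (H : Subgroup (Multiplicative Δ →* kˣ)) :
    sInf {I : Ideal A |
        (∀ h ∈ H, ∀ a ∈ I, act 𝒜 h a ∈ I) ∧
        (∀ h ∈ H, ∀ a : A, act 𝒜 h a - a ∈ I)} =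
      Ideal.span (⋃ χ ∈ {χ : Δ | ∃ h ∈ H, h (Multiplicative.ofAdd χ) ≠ 1},
        (𝒜 χ : Set A)) :=
  fixed_ideal_eq_span_general 𝒜 H

end Stmt18
end
end
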